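/- arXiv:2107.07659 — 2 statements merged into one kernel-verified Lean document; each statement's English description precedes it below -/
import Mathlib

section
/- Lemma 6 (conversion between KL-regularized backups of q and entropy-regularized backups of h): In the dynamic-KL scheme, for every k ≥ 1: η_k · T^{1/η_k,0}_{π_{k+1}|π_k} q_k = Z_k · T^{0,1/Z_k}_{π_{k+1}} h_k − Z_{k-1} · T^{0,1/Z_{k-1}}_{π_k} h_{k-1}; and for k = 0: η_0 · T^{1/η_0,0}_{π_1|π_0} q_0 = Z_0 · T^{0,1/η_0}_{π_1} h_0 − γ P H(π_0). -/
open Finset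

noncomputable section

/-- A transition kernel on a finite MDP: `P s a s'` is the probability of moving to `s'`
from `s` after action `a`. -/
def IsKernel {S A : Type*} [Fintype S] (P : S → A → S → ℝ) : Prop :=
  (∀ s a s', 0 ≤ P s a s') ∧ ∀ s a, ∑ s', P s a s' = 1

/-- A policy: `π s a` is the probability of action `a` in state `s`. -/
def IsPolicy {S A : Type*} [Fintype A] (π : S → A → ℝ) : Prop :=
  (∀ s a, 0 ≤ π s a) ∧ ∀ s, ∑ a, π s a = 1

/-- `(P v)(s,a) = ∑_{s'} P(s'|s,a) v(s')`. -/
def kerApp {S A : Type*} [Fintype S] (P : S → A → S → ℝ) (v : S → ℝ) : S → A → ℝ :=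
  fun s a => ∑ s', P s a s' * v s'

/-- `⟨f₁,f₂⟩(s) = ∑_a f₁(s,a) f₂(s,a)`. -/
def dotSA {S A : Type*} [Fintype A] (f₁ f₂ : S → A → ℝ) : S → ℝ :=
  fun s => ∑ a, f₁ s a * f₂ s a

/-- The policy-induced transition operator `P_π q = P ⟨π, q⟩` on `ℝ^{S×A}`. -/
def Ppi {S A : Type*} [Fintype S] [Fintype A] (P : S → A → S → ℝ) (π : S → A → ℝ)
    (q : S → A → ℝ) : S → A → ℝ :=
  kerApp P (dotSA π q)

/-- The Bellman evaluation operator `T_π q = r + γ P_π q`. -/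
def bellman {S A : Type*} [Fintype S] [Fintype A] (P : S → A → S → ℝ) (r : S → A → ℝ)
    (γ : ℝ) (π : S → A → ℝ) (q : S → A → ℝ) : S → A → ℝ :=
  fun s a => r s a + γ * Ppi P π q s a

/-- The Shannon entropy of a policy, `H(π)(s) = -∑_a π(a|s) ln π(a|s)` (with `0 ln 0 = 0`). -/
def entPol {S A : Type*} [Fintype A] (π : S → A → ℝ) : S → ℝ :=
  fun s => -∑ a, π s a * Real.log (π s a)

/-- The KL divergence between policies,
`KL(π₁‖π₂)(s) = ∑_a π₁(a|s)(ln π₁(a|s) - ln π₂(a|s))`. -/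
def klPol {S A : Type*} [Fintype A] (π₁ π₂ : S → A → ℝ) : S → ℝ :=
  fun s => ∑ a, π₁ s a * (Real.log (π₁ s a) - Real.log (π₂ s a))

/-- The KL-regularized Bellman operator `T^{λ,0}_{π|μ} q = r + γ P(⟨π,q⟩ - λ KL(π‖μ))`. -/
def TKL {S A : Type*} [Fintype S] [Fintype A] (P : S → A → S → ℝ) (r : S → A → ℝ)
    (γ lam : ℝ) (π μ : S → A → ℝ) (q : S → A → ℝ) : S → A → ℝ :=
  fun s a => r s a + γ * kerApp P (fun s' => dotSA π q s' - lam * klPol π μ s') s a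

/-- The entropy-regularized Bellman operator `T^{0,τ}_π q = r + γ P(⟨π,q⟩ + τ H(π))`. -/
def TH {S A : Type*} [Fintype S] [Fintype A] (P : S → A → S → ℝ) (r : S → A → ℝ)
    (γ tau : ℝ) (π : S → A → ℝ) (q : S → A → ℝ) : S → A → ℝ :=
  fun s a => r s a + γ * kerApp P (fun s' => dotSA π q s' + tau * entPol π s') s a

private lemma sum_exp_pos' {A : Type*} [Fintype A] [Nonempty A] (g : A → ℝ) :
    0 < ∑ b, Real.exp (g b) :=
  Finset.sum_pos (fun _ _ => Real.exp_pos _) Finset.univ_nonempty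

private lemma log_softmax' {A : Type*} [Fintype A] [Nonempty A] (g : A → ℝ) (a : A) :
    Real.log (Real.exp (g a) / ∑ b, Real.exp (g b)) = g a - Real.log (∑ b, Real.exp (g b)) := by
  rw [Real.log_div (Real.exp_ne_zero _) (sum_exp_pos' g).ne', Real.log_exp]

private lemma softmax_sum' {A : Type*} [Fintype A] [Nonempty A] (g : A → ℝ) :
    ∑ a, Real.exp (g a) / ∑ b, Real.exp (g b) = 1 := by
  rw [← Finset.sum_div, div_self (sum_exp_pos' g).ne']

private lemma pointwise_key' {A : Type*} [Fintype A] [Nonempty A]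
    (g1 g0 qf p1 p0 : A → ℝ)
    (hp1 : ∀ a, p1 a = Real.exp (g1 a) / ∑ b, Real.exp (g1 b))
    (hp0 : ∀ a, p0 a = Real.exp (g0 a) / ∑ b, Real.exp (g0 b))
    (hq : ∀ a, qf a = g1 a - g0 a) :
    (∑ a, p1 a * qf a) - (∑ a, p1 a * (Real.log (p1 a) - Real.log (p0 a)))
      = ((∑ a, p1 a * g1 a) - ∑ a, p1 a * Real.log (p1 a))
        - ((∑ a, p0 a * g0 a) - ∑ a, p0 a * Real.log (p0 a)) := by
  have hs1 : ∑ a, p1 a = 1 := by simp only [hp1]; exact softmax_sum' g1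
  have hs0 : ∑ a, p0 a = 1 := by simp only [hp0]; exact softmax_sum' g0
  have hl1 : ∀ a, Real.log (p1 a) = g1 a - Real.log (∑ b, Real.exp (g1 b)) := fun a => by
    rw [hp1]; exact log_softmax' g1 a
  have hl0 : ∀ a, Real.log (p0 a) = g0 a - Real.log (∑ b, Real.exp (g0 b)) := fun a => by
    rw [hp0]; exact log_softmax' g0 a
  set L1 := Real.log (∑ b, Real.exp (g1 b))
  set L0 := Real.log (∑ b, Real.exp (g0 b))
  have e1 : ∑ a, p1 a * Real.log (p1 a) = (∑ a, p1 a * g1 a) - L1 := by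
    simp only [hl1, mul_sub, Finset.sum_sub_distrib, ← Finset.sum_mul, hs1, one_mul]
  have e0 : ∑ a, p0 a * Real.log (p0 a) = (∑ a, p0 a * g0 a) - L0 := by
    simp only [hl0, mul_sub, Finset.sum_sub_distrib, ← Finset.sum_mul, hs0, one_mul]
  have e2 : ∑ a, p1 a * Real.log (p0 a) = (∑ a, p1 a * g0 a) - L0 := by
    simp only [hl0, mul_sub, Finset.sum_sub_distrib, ← Finset.sum_mul, hs1, one_mul]
  have e3 : ∑ a, p1 a * qf a = (∑ a, p1 a * g1 a) - ∑ a, p1 a * g0 a := by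
    simp only [hq, mul_sub, Finset.sum_sub_distrib]
  have e4 : ∑ a, p1 a * (Real.log (p1 a) - Real.log (p0 a))
      = (∑ a, p1 a * Real.log (p1 a)) - ∑ a, p1 a * Real.log (p0 a) := by
    simp only [mul_sub, Finset.sum_sub_distrib]
  rw [e3, e4, e1, e2, e0]; ring

private lemma aux1' (c X K : ℝ) (hc : c ≠ 0) : c * (X - 1 / c * K) = c * X - K := by
  field_simp

private lemma aux2' (c X K : ℝ) (hc : c ≠ 0) : c * (X + 1 / c * -K) = c * X - K := by
  field_simp; ring

/-- Lemma 6: conversion between KL-regularized backups of `q_k` and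
entropy-regularized backups of the averaged value `h_k` in the dynamic-KL scheme. -/
theorem kl_backup_to_entropy_backup
    {S A : Type*} [Fintype S] [Fintype A] [Nonempty S] [Nonempty A]
    (P : S → A → S → ℝ) (hP : IsKernel P)
    (r : S → A → ℝ) (γ : ℝ) (hγ0 : 0 < γ) (hγ1 : γ < 1)
    (η : ℕ → ℝ) (hη : ∀ k, 0 < η k)
    (Z : ℕ → ℝ) (hZ : ∀ k, Z k = ∑ j ∈ Finset.range (k + 1), η j)
    (q : ℕ → S → A → ℝ)
    (h : ℕ → S → A → ℝ)
    (hh : ∀ k s a, h k s a = (1 / Z k) * ∑ j ∈ Finset.range (k + 1), η j * q j s a)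
    (π : ℕ → S → A → ℝ)
    (hπ0 : ∀ s a, π 0 s a = 1 / (Fintype.card A : ℝ))
    (hπ : ∀ k s a, π (k + 1) s a =
      Real.exp (Z k * h k s a) / ∑ b, Real.exp (Z k * h k s b)) :
    (∀ k, 1 ≤ k → ∀ s a,
      η k * TKL P r γ (1 / η k) (π (k + 1)) (π k) (q k) s a =
        Z k * TH P r γ (1 / Z k) (π (k + 1)) (h k) s a
          - Z (k - 1) * TH P r γ (1 / Z (k - 1)) (π k) (h (k - 1)) s a) ∧
    (∀ s a,
      η 0 * TKL P r γ (1 / η 0) (π 1) (π 0) (q 0) s a =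
        Z 0 * TH P r γ (1 / η 0) (π 1) (h 0) s a
          - γ * kerApp P (entPol (π 0)) s a) := by
  have hZpos : ∀ k, 0 < Z k := fun k => by
    rw [hZ]
    exact Finset.sum_pos (fun j _ => hη j) (Finset.nonempty_range_iff.mpr (Nat.succ_ne_zero k))
  have hZh : ∀ k s a, Z k * h k s a = ∑ j ∈ Finset.range (k + 1), η j * q j s a := by
    intro k s a
    rw [hh, ← mul_assoc, mul_one_div, div_self (hZpos k).ne', one_mul]
  have outer : ∀ s a (c : ℝ) (f : S → ℝ),
      c * (r s a + γ * ∑ s', P s a s' * f s')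
        = c * r s a + γ * ∑ s', P s a s' * (c * f s') := by
    intro s a c f
    have : ∑ s', P s a s' * (c * f s') = c * ∑ s', P s a s' * f s' := by
      rw [Finset.mul_sum]; exact Finset.sum_congr rfl fun _ _ => by ring
    rw [this]; ring
  constructor
  · intro k hk s a
    obtain ⟨m, rfl⟩ : ∃ m, k = m + 1 := ⟨k - 1, by omega⟩
    simp only [Nat.add_sub_cancel]
    have hkey : ∀ s' a', η (m+1) * q (m+1) s' a'
        = Z (m+1) * h (m+1) s' a' - Z m * h m s' a' := by
      intro s' a'
      rw [hZh, hZh, Finset.sum_range_succ]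
      ring
    have hηm := (hη (m+1)).ne'
    have hZ1 := (hZpos (m+1)).ne'
    have hZ0 := (hZpos m).ne'
    have hsplit : ∀ s',
        η (m+1) * (dotSA (π (m+1+1)) (q (m+1)) s'
            - 1 / η (m+1) * klPol (π (m+1+1)) (π (m+1)) s')
          = Z (m+1) * (dotSA (π (m+1+1)) (h (m+1)) s' + 1 / Z (m+1) * entPol (π (m+1+1)) s')
            - Z m * (dotSA (π (m+1)) (h m) s' + 1 / Z m * entPol (π (m+1)) s') := by
      intro s'
      have PK := pointwise_key' (fun a => Z (m+1) * h (m+1) s' a) (fun a => Z m * h m s' a)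
        (fun a => η (m+1) * q (m+1) s' a) (fun a => π (m+1+1) s' a) (fun a => π (m+1) s' a)
        (fun a => hπ (m+1) s' a) (fun a => hπ m s' a) (fun a => hkey s' a)
      simp only [dotSA, klPol, entPol]
      have t1 : η (m+1) * ∑ a, π (m+1+1) s' a * q (m+1) s' a
          = ∑ a, π (m+1+1) s' a * (η (m+1) * q (m+1) s' a) := by
        rw [Finset.mul_sum]; exact Finset.sum_congr rfl fun _ _ => by ring
      have t2 : Z (m+1) * ∑ a, π (m+1+1) s' a * h (m+1) s' a
          = ∑ a, π (m+1+1) s' a * (Z (m+1) * h (m+1) s' a) := by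
        rw [Finset.mul_sum]; exact Finset.sum_congr rfl fun _ _ => by ring
      have t3 : Z m * ∑ a, π (m+1) s' a * h m s' a
          = ∑ a, π (m+1) s' a * (Z m * h m s' a) := by
        rw [Finset.mul_sum]; exact Finset.sum_congr rfl fun _ _ => by ring
      rw [aux1' _ _ _ hηm, aux2' _ _ _ hZ1, aux2' _ _ _ hZ0, t1, t2, t3]
      linarith [PK]
    have hZsucc : Z (m+1) = Z m + η (m+1) := by
      rw [hZ (m+1), hZ m, Finset.sum_range_succ]
    simp only [TKL, TH, kerApp]
    rw [outer, outer, outer]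
    have hsum : ∑ s', P s a s' *
          (η (m+1) * (dotSA (π (m+1+1)) (q (m+1)) s'
            - 1 / η (m+1) * klPol (π (m+1+1)) (π (m+1)) s'))
        = (∑ s', P s a s' * (Z (m+1) * (dotSA (π (m+1+1)) (h (m+1)) s'
            + 1 / Z (m+1) * entPol (π (m+1+1)) s')))
          - ∑ s', P s a s' * (Z m * (dotSA (π (m+1)) (h m) s'
            + 1 / Z m * entPol (π (m+1)) s')) := by
      rw [← Finset.sum_sub_distrib]
      refine Finset.sum_congr rfl fun s' _ => ?_
      rw [← mul_sub, hsplit s']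
    rw [hsum, hZsucc]
    ring
  · intro s a
    have hZ0eq : Z 0 = η 0 := by rw [hZ]; simp
    have hη0 := (hη 0).ne'
    have hkey0 : ∀ s' a', η 0 * q 0 s' a' = η 0 * h 0 s' a' - (fun _ : A => (0:ℝ)) a' := by
      intro s' a'
      have := hZh 0 s' a'
      rw [Finset.sum_range_one] at this
      rw [hZ0eq] at this
      simp [← this]
    have hsplit : ∀ s',
        η 0 * (dotSA (π 1) (q 0) s' - 1 / η 0 * klPol (π 1) (π 0) s')
          = η 0 * (dotSA (π 1) (h 0) s' + 1 / η 0 * entPol (π 1) s') - entPol (π 0) s' := by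
      intro s'
      have hp1 : ∀ a', π 1 s' a' = Real.exp (η 0 * h 0 s' a') / ∑ b, Real.exp (η 0 * h 0 s' b) := by
        intro a'
        rw [← hZ0eq]
        exact hπ 0 s' a'
      have hp0 : ∀ a', π 0 s' a' = Real.exp (0:ℝ) / ∑ _b : A, Real.exp (0:ℝ) := by
        intro a'
        rw [hπ0]
        simp
      have PK := pointwise_key' (fun a => η 0 * h 0 s' a) (fun _ => (0:ℝ))
        (fun a => η 0 * q 0 s' a) (fun a => π 1 s' a) (fun a => π 0 s' a)
        (fun a => hp1 a) (fun a => hp0 a)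
        (fun a => hkey0 s' a)
      simp only [mul_zero, Finset.sum_const_zero] at PK
      simp only [dotSA, klPol, entPol]
      have t1 : η 0 * ∑ a, π 1 s' a * q 0 s' a
          = ∑ a, π 1 s' a * (η 0 * q 0 s' a) := by
        rw [Finset.mul_sum]; exact Finset.sum_congr rfl fun _ _ => by ring
      have t2 : η 0 * ∑ a, π 1 s' a * h 0 s' a
          = ∑ a, π 1 s' a * (η 0 * h 0 s' a) := by
        rw [Finset.mul_sum]; exact Finset.sum_congr rfl fun _ _ => by ring
      rw [aux1' _ _ _ hη0, aux2' _ _ _ hη0, t1, t2]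
      linarith [PK]
    simp only [TKL, TH, kerApp]
    rw [hZ0eq, outer, outer]
    have hsum : ∑ s', P s a s' *
          (η 0 * (dotSA (π 1) (q 0) s' - 1 / η 0 * klPol (π 1) (π 0) s'))
        = (∑ s', P s a s' * (η 0 * (dotSA (π 1) (h 0) s' + 1 / η 0 * entPol (π 1) s')))
          - ∑ s', P s a s' * entPol (π 0) s' := by
      rw [← Finset.sum_sub_distrib]
      refine Finset.sum_congr rfl fun s' _ => ?_
      rw [← mul_sub, hsplit s']
    rw [hsum]
    ring
end
end

section
/- Theorem 2 (error propagation bound for dynamic error-aware KL regularization): Consider the dynamic-KL scheme: (λ_k)_{k≥0} positive reals, η_k = 1/λ_k, Z_k = Σ_{j=0}^k η_j; π_0 the uniform policy; for each k ≥ 0, π_{k+1}(a|s) = π_k(a|s) exp(η_k q_k(s,a)) / Σ_b π_k(b|s) exp(η_k q_k(s,b)) (the maximizer of π ↦ ⟨π, q_k⟩ − λ_k KL(π||π_k)) and q_{k+1} = T^{λ_k,0}_{π_{k+1}|π_k} q_k + ε_{k+1} for given ε_{k+1} ∈ ℝ^{S×A}. Let q_max ≥ 0 satisfy ‖q_j‖_∞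 ≤ q_max and ‖T^{λ_j,0}_{π_{j+1}|π_j} q_j‖_∞ ≤ q_max for all j, and let π_* be an optimal policy (q_{π_*} ≥ q_π componentwise for every policy π), with q_* = q_{π_*}. Then for every k ≥ 1: ‖q_* − q_{π_{k+1}}‖_∞ ≤ (2/(1−γ)) · (1/Z_k) · ( ‖Σ_{j=1}^k η_j ε_j‖_∞ + (η_{k+1} + η_0 + Σ_{j=0}^k |η_{j+1} − η_j|) · q_max + γ ln|A| ). -/
open Finset

noncomputable section

/-!
The policies are softmax policies of the cumulative score, `π k ∝ exp (∑_{j<k} η j q j)`, and by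
the Gibbs variational formula the regularized step is `T_j = r + γ P v_j` with
`η_j v_j = log ∑_a π_j exp (η_j q_j)`; these increments telescope to
`logSumExp (∑_{j≤k} η j q j) - log |A|`.

Weighting the steps `T_j` by `η (j + 1)` and restoring the missing mass `η 0` gives
`F = Z_k r + γ P Φ + ∑_{j=1}^k η_j ε_j`, where `F` is within `2 η_0 qmax` of the cumulative
score `C` and `Φ` is within `(∑_{j<k} |η_j - η_{j+1}| + η_k - η_0) qmax` of `logSumExp C - log |A|`.
`logSumExp C` dominates every policy average of `C` and, up to the entropy bound `log |A|`, is
dominated by the average under `softmax C = π_{k+1}`. Comparing `F` with `Z_k q_*` and with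
`Z_k q_{π_{k+1}}` through their Bellman equations therefore gives two inequalities of the form
`D ≤ γ P_π D + c`, each solved at a maximizing state-action pair.
-/

section Averages

variable {ι : Type*} [Fintype ι] {p x : ι → ℝ} {B : ℝ}

theorem sum_mul_le_of_le (hp : ∀ i, 0 ≤ p i) (h1 : ∑ i, p i = 1) (hx : ∀ i, x i ≤ B) :
    ∑ i, p i * x i ≤ B :=
  calc ∑ i, p i * x i ≤ ∑ i, p i * B :=
        sum_le_sum fun i _ => mul_le_mul_of_nonneg_left (hx i) (hp i)
    _ = B := by rw [← sum_mul, h1, one_mul]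

theorem le_sum_mul_of_le (hp : ∀ i, 0 ≤ p i) (h1 : ∑ i, p i = 1) (hx : ∀ i, B ≤ x i) :
    B ≤ ∑ i, p i * x i :=
  calc B = ∑ i, p i * B := by rw [← sum_mul, h1, one_mul]
    _ ≤ ∑ i, p i * x i := sum_le_sum fun i _ => mul_le_mul_of_nonneg_left (hx i) (hp i)

theorem sum_mul_sub_sum_mul_le {y : ι → ℝ} (hp : ∀ i, 0 ≤ p i) (h1 : ∑ i, p i = 1)
    (hxy : ∀ i, x i - y i ≤ B) : ∑ i, p i * x i - ∑ i, p i * y i ≤ B := by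
  rw [← sum_sub_distrib]
  simp only [← mul_sub]
  exact sum_mul_le_of_le hp h1 hxy

theorem sum_mul_log_inv_le_log_card (hp : ∀ i, 0 < p i) (h1 : ∑ i, p i = 1) :
    ∑ i, p i * Real.log (p i)⁻¹ ≤ Real.log (Fintype.card ι) := by
  have jensen := strictConcaveOn_log_Ioi.concaveOn.le_map_sum (t := univ) (w := p)
    (p := fun i => (p i)⁻¹) (fun i _ => (hp i).le) h1 (fun i _ => inv_pos.2 (hp i))
  simpa [smul_eq_mul, mul_inv_cancel₀ (hp _).ne'] using jensen

end Averages

theorem abs_sum_mul_le_sum_abs_mul {ι : Type*} (I : Finset ι) (c v : ι → ℝ) {B : ℝ}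
    (hv : ∀ i, |v i| ≤ B) : |∑ i ∈ I, c i * v i| ≤ (∑ i ∈ I, |c i|) * B := by
  refine (abs_sum_le_sum_abs _ _).trans ?_
  rw [sum_mul]
  refine sum_le_sum fun i _ => ?_
  rw [abs_mul]
  exact mul_le_mul_of_nonneg_left (hv i) (abs_nonneg _)

theorem exists_nonneg_sum_eq_sum_abs_sub {ι : Type*} (I : Finset ι) (x : ι → ℝ)
    (hx : 0 ≤ ∑ i ∈ I, x i) :
    ∃ w : ι → ℝ, (∀ i, 0 ≤ w i) ∧ ∑ i ∈ I, w i = ∑ i ∈ I, x i ∧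
      ∑ i ∈ I, |x i - w i| = ∑ i ∈ I, |x i| - ∑ i ∈ I, x i := by
  set t := ∑ i ∈ I, max (x i) 0
  have hxt : ∑ i ∈ I, x i ≤ t := sum_le_sum fun i _ => le_max_left _ _
  set c := (∑ i ∈ I, x i) / t
  have hc0 : 0 ≤ c := div_nonneg hx (hx.trans hxt)
  have hc1 : c ≤ 1 := div_le_one_of_le₀ hxt (hx.trans hxt)
  have hct : c * t = ∑ i ∈ I, x i := div_mul_cancel_of_imp fun ht => le_antisymm (ht ▸ hxt) hx
  have hdist : ∀ i, |x i - c * max (x i) 0| = |x i| - c * max (x i) 0 := fun i => by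
    rcases le_total (x i) 0 with h | h
    · simp [max_eq_right h]
    · rw [max_eq_left h, abs_of_nonneg h, abs_of_nonneg (by nlinarith)]
  refine ⟨fun i => c * max (x i) 0, fun i => mul_nonneg hc0 (le_max_right _ _),
    by rw [← mul_sum, hct], ?_⟩
  rw [sum_congr rfl fun i _ => hdist i, sum_sub_distrib, ← mul_sum, hct]

/-- `w` restores the mass `η 0` that the lagged weights `η (j + 1)` of the steps `j < k` miss;
placing it where `η` decreases, and on `k`, costs only the variation of `η`. -/
theorem exists_lagged_weights {η : ℕ → ℝ} (hη : ∀ j, 0 ≤ η j) (k : ℕ) :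
    ∃ w : ℕ → ℝ, (∀ j, 0 ≤ w j) ∧ ∑ j ∈ range (k + 1), w j = η 0 ∧
      ∀ (v : ℕ → ℝ) (B : ℝ), (∀ j, |v j| ≤ B) →
        |∑ j ∈ range (k + 1), w j * v j + ∑ j ∈ range k, η (j + 1) * v j
            - ∑ j ∈ range (k + 1), η j * v j|
          ≤ (∑ j ∈ range k, |η j - η (j + 1)| + η k - η 0) * B := by
  have hlag : ∀ g : ℕ → ℝ, ∑ j ∈ range (k + 1), (if j < k then g j else 0) = ∑ j ∈ range k, g j :=
    fun g => by
    rw [sum_range_succ, if_neg (lt_irrefl k), add_zero]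
    exact sum_congr rfl fun j hj => if_pos (mem_range.1 hj)
  set x : ℕ → ℝ := fun j => η j - if j < k then η (j + 1) else 0
  have hx : ∑ j ∈ range (k + 1), x j = η 0 := by
    rw [sum_sub_distrib, hlag, sum_range_succ']
    ring
  have hxabs : ∑ j ∈ range (k + 1), |x j| = ∑ j ∈ range k, |η j - η (j + 1)| + η k := by
    rw [sum_range_succ]
    simp only [x, lt_irrefl, if_false, sub_zero, abs_of_nonneg (hη k)]
    congr 1
    exact sum_congr rfl fun j hj => by rw [if_pos (mem_range.1 hj)]
  obtain ⟨w, hw0, hwsum, hwdist⟩ := exists_nonneg_sum_eq_sum_abs_sub _ x (hx ▸ hη 0)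
  refine ⟨w, hw0, hwsum.trans hx, fun v B hv => ?_⟩
  have hshift : ∑ j ∈ range k, η (j + 1) * v j = ∑ j ∈ range (k + 1), (η j - x j) * v j := by
    simp only [x, sub_sub_cancel, ite_mul, zero_mul]
    exact (hlag _).symm
  have hsum : ∑ j ∈ range (k + 1), w j * v j + ∑ j ∈ range k, η (j + 1) * v j
      - ∑ j ∈ range (k + 1), η j * v j = ∑ j ∈ range (k + 1), (w j - x j) * v j := by
    rw [hshift, ← sum_add_distrib, ← sum_sub_distrib]
    exact sum_congr rfl fun j _ => by ring
  rw [hsum, ← hxabs, ← hx, ← hwdist]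
  refine (abs_sum_mul_le_sum_abs_mul _ _ _ hv).trans_eq ?_
  simp only [abs_sub_comm]

theorem lagged_variation_le (η : ℕ → ℝ) (k : ℕ) :
    η 0 + ∑ j ∈ range k, |η j - η (j + 1)| + η k ≤
      η (k + 1) + η 0 + ∑ j ∈ range (k + 1), |η (j + 1) - η j| := by
  rw [sum_range_succ, sum_congr rfl fun j _ => abs_sub_comm (η (j + 1)) (η j)]
  linarith [neg_abs_le (η (k + 1) - η k)]

section Softmax

variable {A : Type*} [Fintype A]

def logSumExp (x : A → ℝ) : ℝ :=
  Real.log (∑ a, Real.exp (x a))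

def softmax (x : A → ℝ) (a : A) : ℝ :=
  Real.exp (x a) / ∑ b, Real.exp (x b)

theorem sum_exp_pos [Nonempty A] (x : A → ℝ) : 0 < ∑ a, Real.exp (x a) :=
  sum_pos (fun _ _ => Real.exp_pos _) univ_nonempty

theorem softmax_pos [Nonempty A] (x : A → ℝ) (a : A) : 0 < softmax x a :=
  div_pos (Real.exp_pos _) (sum_exp_pos x)

theorem sum_softmax [Nonempty A] (x : A → ℝ) : ∑ a, softmax x a = 1 := by
  simp only [softmax, ← sum_div, div_self (sum_exp_pos x).ne']

theorem log_softmax [Nonempty A] (x : A → ℝ) (a : A) :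
    Real.log (softmax x a) = x a - logSumExp x := by
  rw [softmax, Real.log_div (Real.exp_pos _).ne' (sum_exp_pos x).ne', Real.log_exp, logSumExp]

theorem softmax_zero (a : A) : softmax (0 : A → ℝ) a = 1 / Fintype.card A := by
  simp [softmax]

theorem logSumExp_zero : logSumExp (0 : A → ℝ) = Real.log (Fintype.card A) := by
  simp [logSumExp]

theorem sum_softmax_mul_exp (x y : A → ℝ) :
    ∑ a, softmax x a * Real.exp (y a) = (∑ a, Real.exp ((x + y) a)) / ∑ a, Real.exp (x a) := by
  simp only [softmax, Pi.add_apply, Real.exp_add, div_mul_eq_mul_div, sum_div]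

theorem softmax_mul_exp_div [Nonempty A] (x y : A → ℝ) (a : A) :
    softmax x a * Real.exp (y a) / ∑ b, softmax x b * Real.exp (y b) = softmax (x + y) a := by
  rw [sum_softmax_mul_exp, softmax, softmax, Pi.add_apply, Real.exp_add]
  field_simp [(sum_exp_pos x).ne', (sum_exp_pos (x + y)).ne']

theorem log_sum_softmax_mul_exp [Nonempty A] (x y : A → ℝ) :
    Real.log (∑ a, softmax x a * Real.exp (y a)) = logSumExp (x + y) - logSumExp x := by
  rw [sum_softmax_mul_exp, Real.log_div (sum_exp_pos _).ne' (sum_exp_pos _).ne']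
  rfl

theorem le_logSumExp [Nonempty A] (x : A → ℝ) (a : A) : x a ≤ logSumExp x := by
  rw [logSumExp, Real.le_log_iff_exp_le (sum_exp_pos x)]
  exact single_le_sum (fun b _ => (Real.exp_pos (x b)).le) (mem_univ a)

theorem sum_mul_le_logSumExp [Nonempty A] {p : A → ℝ} (hp : ∀ a, 0 ≤ p a) (h1 : ∑ a, p a = 1)
    (x : A → ℝ) :
    ∑ a, p a * x a ≤ logSumExp x :=
  sum_mul_le_of_le hp h1 (le_logSumExp x)

theorem logSumExp_sub_log_card_le [Nonempty A] (x : A → ℝ) :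
    logSumExp x - Real.log (Fintype.card A) ≤ ∑ a, softmax x a * x a := by
  have gibbs := sum_mul_log_inv_le_log_card (softmax_pos x) (sum_softmax x)
  have hx : ∀ a, x a = logSumExp x - Real.log (softmax x a)⁻¹ := fun a => by
    rw [Real.log_inv, log_softmax]; ring
  have : ∑ a, softmax x a * x a = logSumExp x - ∑ a, softmax x a * Real.log (softmax x a)⁻¹ := by
    conv_lhs => enter [2, a]; rw [hx a]
    simp only [mul_sub, sum_sub_distrib, ← sum_mul, sum_softmax, one_mul]
  linarith

def softValue (η : ℝ) (μ x : A → ℝ) : ℝ :=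
  η⁻¹ * Real.log (∑ a, μ a * Real.exp (η * x a))

theorem sum_mul_sub_kl_eq_softValue [Nonempty A] {η : ℝ} (hη : η ≠ 0) {μ x π : A → ℝ}
    (hμ : ∀ a, 0 < μ a)
    (hπ : ∀ a, π a = μ a * Real.exp (η * x a) / ∑ b, μ b * Real.exp (η * x b)) :
    ∑ a, π a * x a - η⁻¹ * ∑ a, π a * (Real.log (π a) - Real.log (μ a)) = softValue η μ x := by
  set W := ∑ b, μ b * Real.exp (η * x b)
  have hW : 0 < W := sum_pos (fun b _ => mul_pos (hμ b) (Real.exp_pos _)) univ_nonempty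
  have hsum : ∑ a, π a = 1 := by
    simp only [hπ, ← sum_div]
    exact div_self hW.ne'
  have hlog : ∀ a, Real.log (π a) - Real.log (μ a) = η * x a - Real.log W := fun a => by
    rw [hπ, Real.log_div (mul_pos (hμ a) (Real.exp_pos _)).ne' hW.ne',
      Real.log_mul (hμ a).ne' (Real.exp_pos _).ne', Real.log_exp]
    ring
  have hkl : ∑ a, π a * (Real.log (π a) - Real.log (μ a)) = η * ∑ a, π a * x a - Real.log W := by
    simp only [hlog, mul_sub, sum_sub_distrib, ← sum_mul, hsum, one_mul, mul_sum]
    congr 1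
    exact sum_congr rfl fun a _ => by ring
  rw [hkl, softValue, mul_sub, inv_mul_cancel_left₀ hη]
  ring

theorem abs_softValue_le {η : ℝ} (hη : 0 < η) {μ x : A → ℝ} (hμ : ∀ a, 0 ≤ μ a)
    (h1 : ∑ a, μ a = 1) {B : ℝ} (hx : ∀ a, |x a| ≤ B) : |softValue η μ x| ≤ B := by
  have hW : 0 < ∑ a, μ a * Real.exp (η * x a) := by
    refine lt_of_lt_of_le (Real.exp_pos (-(η * B))) (le_sum_mul_of_le hμ h1 fun a => ?_)
    exact Real.exp_le_exp.2 (by nlinarith [neg_abs_le (x a), hx a])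
  rw [softValue, abs_le, le_inv_mul_iff₀ hη, inv_mul_le_iff₀ hη,
    Real.le_log_iff_exp_le hW, Real.log_le_iff_le_exp hW]
  constructor
  · refine le_sum_mul_of_le hμ h1 fun a => Real.exp_le_exp.2 ?_
    nlinarith [neg_abs_le (x a), hx a]
  · refine sum_mul_le_of_le hμ h1 fun a => Real.exp_le_exp.2 ?_
    nlinarith [le_abs_self (x a), hx a]

end Softmax

theorem isPolicy_softmax {S A : Type*} [Fintype A] [Nonempty A] (x : S → A → ℝ) :
    IsPolicy fun s => softmax (x s) :=
  ⟨fun s a => (softmax_pos (x s) a).le, fun s => sum_softmax (x s)⟩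

theorem sum_mul_eq_of_affine_kerApp {S A ι : Type*} [Fintype S] (I : Finset ι) (β : ι → ℝ)
    (P : S → A → S → ℝ) (r : S → A → ℝ) (γ : ℝ) {T : ι → S → A → ℝ} {v : ι → S → ℝ}
    (hT : ∀ j s a, T j s a = r s a + γ * kerApp P (v j) s a) (s : S) (a : A) :
    ∑ j ∈ I, β j * T j s a =
      (∑ j ∈ I, β j) * r s a + γ * kerApp P (fun s' => ∑ j ∈ I, β j * v j s') s a := by
  simp only [hT, kerApp, mul_add, sum_add_distrib, sum_mul, mul_sum]
  rw [sum_comm]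
  congr 1
  refine sum_congr rfl fun j _ => sum_congr rfl fun s' _ => ?_
  ring

section Bellman

variable {S A : Type*} [Fintype S] [Fintype A]

theorem abs_apply_le_norm (f : S → A → ℝ) (s : S) (a : A) : |f s a| ≤ ‖f‖ :=
  (norm_le_pi_norm (f s) a).trans (norm_le_pi_norm f s)

theorem norm_le_of_forall_abs_le [Nonempty S] [Nonempty A] {f : S → A → ℝ} {C : ℝ}
    (h : ∀ s a, |f s a| ≤ C) : ‖f‖ ≤ C :=
  (pi_norm_le_iff_of_nonempty f).2 fun s => (pi_norm_le_iff_of_nonempty (f s)).2 fun a => h s a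

theorem TKL_eq_of_tilt [Nonempty A] (P : S → A → S → ℝ) (r : S → A → ℝ) (γ : ℝ) {η : ℝ}
    (hη : η ≠ 0) {μ π q : S → A → ℝ} (hμ : ∀ s a, 0 < μ s a)
    (hπ : ∀ s a, π s a = μ s a * Real.exp (η * q s a) / ∑ b, μ s b * Real.exp (η * q s b))
    (s : S) (a : A) :
    TKL P r γ η⁻¹ π μ q s a = r s a + γ * kerApp P (fun s' => softValue η (μ s') (q s')) s a := by
  simp only [TKL, dotSA, klPol, sum_mul_sub_kl_eq_softValue hη (hμ _) (hπ _)]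

variable {P : S → A → S → ℝ} {r : S → A → ℝ} {γ : ℝ}

theorem Ppi_le_of_le (hP : IsKernel P) {μ : S → A → ℝ} (hμ : IsPolicy μ) {D : S → A → ℝ}
    {m : ℝ} (hD : ∀ s a, D s a ≤ m) (s : S) (a : A) : Ppi P μ D s a ≤ m :=
  sum_mul_le_of_le (hP.1 s a) (hP.2 s a) fun s' =>
    sum_mul_le_of_le (hμ.1 s') (hμ.2 s') fun b => hD s' b

theorem one_sub_mul_le_of_le_Ppi (hP : IsKernel P) {μ : S → A → ℝ} (hμ : IsPolicy μ)
    (hγ0 : 0 ≤ γ) (hγ1 : γ ≤ 1) {D : S → A → ℝ} {c : ℝ}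
    (hD : ∀ s a, D s a ≤ γ * Ppi P μ D s a + c) (s : S) (a : A) : (1 - γ) * D s a ≤ c := by
  have : Nonempty (S × A) := ⟨(s, a)⟩
  obtain ⟨⟨s₀, a₀⟩, hmax⟩ := Finite.exists_max fun p : S × A => D p.1 p.2
  have hstep : D s₀ a₀ ≤ γ * D s₀ a₀ + c := (hD s₀ a₀).trans <| by
    gcongr
    exact Ppi_le_of_le hP hμ (fun s a => hmax (s, a)) s₀ a₀
  calc (1 - γ) * D s a ≤ (1 - γ) * D s₀ a₀ :=
        mul_le_mul_of_nonneg_left (hmax (s, a)) (sub_nonneg.2 hγ1)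
    _ ≤ c := by linarith

theorem one_sub_mul_sub_le_of_bellman (hP : IsKernel P) {μ : S → A → ℝ} (hμ : IsPolicy μ)
    (hγ0 : 0 ≤ γ) (hγ1 : γ ≤ 1) {q F E : S → A → ℝ} {Φ : S → ℝ} {Z c e : ℝ}
    (hq : q = bellman P r γ μ q)
    (hF : ∀ s a, F s a = Z * r s a + γ * kerApp P Φ s a + E s a)
    (hΦ : ∀ s, dotSA μ F s - Φ s ≤ c) (hE : ∀ s a, -E s a ≤ e) (s : S) (a : A) :
    (1 - γ) * (Z * q s a - F s a) ≤ γ * c + e := by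
  refine one_sub_mul_le_of_le_Ppi (D := fun s a => Z * q s a - F s a) hP hμ hγ0 hγ1
    (fun s a => ?_) s a
  have hstep : Z * q s a - F s a - γ * Ppi P μ (fun s a => Z * q s a - F s a) s a =
      γ * kerApp P (fun s' => dotSA μ F s' - Φ s') s a - E s a := by
    have hqsa : q s a = r s a + γ * Ppi P μ q s a := congrFun (congrFun hq s) a
    rw [hqsa, hF]
    simp only [Ppi, kerApp, dotSA, mul_add, mul_sub, sum_sub_distrib, mul_sum]
    ring_nf
  have hkl : γ * kerApp P (fun s' => dotSA μ F s' - Φ s') s a ≤ γ * c :=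
    mul_le_mul_of_nonneg_left (sum_mul_le_of_le (hP.1 s a) (hP.2 s a) hΦ) hγ0
  linarith [hE s a]

theorem one_sub_mul_sub_le_of_softmax_aggregate [Nonempty A] (hP : IsKernel P) (hγ0 : 0 ≤ γ)
    (hγ1 : γ ≤ 1) {μ C q₁ q₂ F E : S → A → ℝ} {Φ : S → ℝ} {Z c ρ e : ℝ} (hμ : IsPolicy μ)
    (hq₁ : q₁ = bellman P r γ μ q₁) (hq₂ : q₂ = bellman P r γ (fun s => softmax (C s)) q₂)
    (hF : ∀ s a, F s a = Z * r s a + γ * kerApp P Φ s a + E s a)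
    (hFC : ∀ s a, |F s a - C s a| ≤ c)
    (hΦ : ∀ s, |Φ s - (logSumExp (C s) - Real.log (Fintype.card A))| ≤ ρ)
    (hE : ∀ s a, |E s a| ≤ e) (s : S) (a : A) :
    (1 - γ) * (Z * (q₁ s a - q₂ s a)) ≤ 2 * (e + (c + ρ)) + γ * Real.log (Fintype.card A) := by
  have hF₁ : ∀ s, dotSA μ F s - Φ s ≤ c + ρ + Real.log (Fintype.card A) := fun s => by
    have hFC' := sum_mul_sub_sum_mul_le (hμ.1 s) (hμ.2 s) fun a => (abs_sub_le_iff.1 (hFC s a)).1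
    have hC := sum_mul_le_logSumExp (hμ.1 s) (hμ.2 s) (C s)
    have hΦ' := (abs_sub_le_iff.1 (hΦ s)).2
    simp only [dotSA]
    linarith
  have hπ := isPolicy_softmax C
  have hF₂ : ∀ s, dotSA (fun s => softmax (C s)) (fun s a => -F s a) s - -Φ s ≤ c + ρ :=
    fun s => by
    have hFC' := sum_mul_sub_sum_mul_le (hπ.1 s) (hπ.2 s) fun a => (abs_sub_le_iff.1 (hFC s a)).2
    have hC := logSumExp_sub_log_card_le (C s)
    have hΦ' := (abs_sub_le_iff.1 (hΦ s)).1
    simp only [dotSA, mul_neg, sum_neg_distrib]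
    linarith
  have hnegF : ∀ s a, -F s a = -Z * r s a + γ * kerApp P (fun s => -Φ s) s a + -E s a :=
    fun s a => by
    simp only [hF, kerApp, mul_neg, sum_neg_distrib]
    ring
  have h₁ := one_sub_mul_sub_le_of_bellman hP hμ hγ0 hγ1 hq₁ hF hF₁
    (fun s a => (neg_le_abs _).trans (hE s a)) s a
  have h₂ := one_sub_mul_sub_le_of_bellman hP hπ hγ0 hγ1 hq₂ hnegF hF₂
    (fun s a => by rw [neg_neg]; exact (le_abs_self _).trans (hE s a)) s a
  have hcρ : γ * (c + ρ) ≤ c + ρ :=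
    mul_le_of_le_one_left (add_nonneg ((abs_nonneg _).trans (hFC s a))
      ((abs_nonneg _).trans (hΦ s))) hγ1
  linarith

end Bellman

section Scheme

variable {S A : Type*} {η : ℕ → ℝ} {q : ℕ → S → A → ℝ}

def cumScore (η : ℕ → ℝ) (q : ℕ → S → A → ℝ) (k : ℕ) (s : S) (a : A) : ℝ :=
  ∑ j ∈ range k, η j * q j s a

theorem cumScore_zero (s : S) : cumScore η q 0 s = 0 := by
  funext a
  simp [cumScore]

theorem cumScore_succ (k : ℕ) (s : S) :
    cumScore η q (k + 1) s = cumScore η q k s + fun a => η k * q k s a := by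
  funext a
  simp [cumScore, sum_range_succ]

theorem eq_softmax_cumScore [Fintype A] [Nonempty A] {π : ℕ → S → A → ℝ}
    (hπ0 : ∀ s a, π 0 s a = 1 / (Fintype.card A : ℝ))
    (hπ : ∀ k s a, π (k + 1) s a =
      π k s a * Real.exp (η k * q k s a) / ∑ b, π k s b * Real.exp (η k * q k s b))
    (k : ℕ) (s : S) : π k s = softmax (cumScore η q k s) := by
  induction k with
  | zero =>
    funext a
    rw [hπ0, cumScore_zero, softmax_zero]
  | succ k ih =>
    funext a
    rw [hπ, ih, cumScore_succ]
    exact softmax_mul_exp_div _ (fun a => η k * q k s a) a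

theorem sum_mul_softValue_eq [Fintype A] [Nonempty A] {π : ℕ → S → A → ℝ} (hη : ∀ j, η j ≠ 0)
    (hπ : ∀ j s, π j s = softmax (cumScore η q j s)) (k : ℕ) (s : S) :
    ∑ j ∈ range k, η j * softValue (η j) (π j s) (q j s) =
      logSumExp (cumScore η q k s) - Real.log (Fintype.card A) := by
  have hstep : ∀ j, η j * softValue (η j) (π j s) (q j s) =
      logSumExp (cumScore η q (j + 1) s) - logSumExp (cumScore η q j s) := fun j => by
    rw [softValue, mul_inv_cancel_left₀ (hη j), hπ, log_sum_softmax_mul_exp, cumScore_succ]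
  rw [sum_congr rfl fun j _ => hstep j, sum_range_sub (fun j => logSumExp (cumScore η q j s)),
    cumScore_zero, logSumExp_zero]

variable {ε T : ℕ → S → A → ℝ}

theorem cumScore_succ_eq (hq : ∀ j s a, q (j + 1) s a = T j s a + ε (j + 1) s a) (k : ℕ) (s : S)
    (a : A) :
    cumScore η q (k + 1) s a = η 0 * q 0 s a + ∑ j ∈ range k, η (j + 1) * T j s a +
      (∑ j ∈ Icc 1 k, η j • ε j) s a := by
  rw [cumScore, sum_range_succ', Finset.sum_apply, Finset.sum_apply, ← Ico_add_one_right_eq_Icc,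
    sum_Ico_eq_sum_range]
  simp only [hq, mul_add, sum_add_distrib, Pi.smul_apply, smul_eq_mul, add_tsub_cancel_right,
    add_comm 1]
  ring

variable [Fintype S] {P : S → A → S → ℝ} {r : S → A → ℝ} {γ : ℝ}

theorem exists_aggregate {v : ℕ → S → ℝ} (hη : ∀ j, 0 ≤ η j)
    (hT : ∀ j s a, T j s a = r s a + γ * kerApp P (v j) s a)
    (hq : ∀ j s a, q (j + 1) s a = T j s a + ε (j + 1) s a) {B : ℝ}
    (hqB : ∀ j s a, |q j s a| ≤ B) (hTB : ∀ j s a, |T j s a| ≤ B) (hvB : ∀ j s, |v j s| ≤ B)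
    (k : ℕ) :
    ∃ (F : S → A → ℝ) (Φ : S → ℝ),
      (∀ s a, F s a = (∑ j ∈ range (k + 1), η j) * r s a + γ * kerApp P Φ s a +
        (∑ j ∈ Icc 1 k, η j • ε j) s a) ∧
      (∀ s a, |F s a - cumScore η q (k + 1) s a| ≤ 2 * η 0 * B) ∧
      ∀ s, |Φ s - ∑ j ∈ range (k + 1), η j * v j s| ≤
        (∑ j ∈ range k, |η j - η (j + 1)| + η k - η 0) * B := by
  obtain ⟨w, hw0, hwsum, hwv⟩ := exists_lagged_weights hη k
  refine ⟨fun s a => ∑ j ∈ range (k + 1), w j * T j s a + ∑ j ∈ range k, η (j + 1) * T j s a +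
      (∑ j ∈ Icc 1 k, η j • ε j) s a,
    fun s => ∑ j ∈ range (k + 1), w j * v j s + ∑ j ∈ range k, η (j + 1) * v j s,
    fun s a => ?_, fun s a => ?_, fun s => ?_⟩
  · dsimp only
    rw [sum_mul_eq_of_affine_kerApp _ _ P r γ hT, sum_mul_eq_of_affine_kerApp _ _ P r γ hT,
      hwsum, sum_range_succ']
    simp only [kerApp, mul_add, sum_add_distrib]
    ring
  · dsimp only
    rw [cumScore_succ_eq hq]
    have hwT := abs_sum_mul_le_sum_abs_mul (range (k + 1)) w (fun j => T j s a) (B := B)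
      fun j => hTB j s a
    simp only [abs_of_nonneg (hw0 _), hwsum] at hwT
    have hq0 : |η 0 * q 0 s a| ≤ η 0 * B := by
      rw [abs_mul, abs_of_nonneg (hη 0)]
      exact mul_le_mul_of_nonneg_left (hqB 0 s a) (hη 0)
    calc _ = |∑ j ∈ range (k + 1), w j * T j s a - η 0 * q 0 s a| := by congr 1; ring
      _ ≤ _ := (abs_sub _ _).trans (by linarith)
  · exact hwv (fun j => v j s) B fun j => hvB j s

end Scheme

/-- Theorem 2: error propagation bound for dynamic error-aware KL
regularization. `‖·‖` on `S → A → ℝ` is the sup (ℓ∞) norm. -/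
theorem dynamic_kl_error_propagation_bound
    {S A : Type*} [Fintype S] [Fintype A] [Nonempty S] [Nonempty A]
    (P : S → A → S → ℝ) (hP : IsKernel P)
    (r : S → A → ℝ) (γ : ℝ) (hγ0 : 0 < γ) (hγ1 : γ < 1)
    (lam : ℕ → ℝ) (hlam : ∀ k, 0 < lam k)
    (η : ℕ → ℝ) (hη : ∀ k, η k = 1 / lam k)
    (Z : ℕ → ℝ) (hZ : ∀ k, Z k = ∑ j ∈ Finset.range (k + 1), η j)
    (q ε : ℕ → S → A → ℝ)
    (π : ℕ → S → A → ℝ)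
    (hπ0 : ∀ s a, π 0 s a = 1 / (Fintype.card A : ℝ))
    (hπ : ∀ k s a, π (k + 1) s a =
      π k s a * Real.exp (η k * q k s a) / ∑ b, π k s b * Real.exp (η k * q k s b))
    (hq : ∀ k s a, q (k + 1) s a =
      TKL P r γ (lam k) (π (k + 1)) (π k) (q k) s a + ε (k + 1) s a)
    (qmax : ℝ) (hqmax : 0 ≤ qmax)
    (hqb : ∀ j, ‖q j‖ ≤ qmax)
    (hTb : ∀ j, ‖TKL P r γ (lam j) (π (j + 1)) (π j) (q j)‖ ≤ qmax)
    (πstar : S → A → ℝ) (hπstar : IsPolicy πstar)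
    (qstar : S → A → ℝ) (hqstar : qstar = bellman P r γ πstar qstar)
    (hopt : ∀ π' : S → A → ℝ, IsPolicy π' →
      ∀ qπ : S → A → ℝ, qπ = bellman P r γ π' qπ → ∀ s a, qπ s a ≤ qstar s a)
    (qpol : ℕ → S → A → ℝ)
    (hqpol : ∀ k, qpol k = bellman P r γ (π k) (qpol k)) :
    ∀ k, 1 ≤ k →
      ‖qstar - qpol (k + 1)‖ ≤
        2 / (1 - γ) * (1 / Z k) *
          (‖∑ j ∈ Finset.Icc 1 k, η j • ε j‖
            + (η (k + 1) + η 0 + ∑ j ∈ Finset.range (k + 1), |η (j + 1) - η j|) * qmax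
            + γ * Real.log (Fintype.card A)) := by
  intro k _
  have hηpos : ∀ j, 0 < η j := fun j => by rw [hη]; exact one_div_pos.2 (hlam j)
  have hlam_eq : ∀ j, lam j = (η j)⁻¹ := fun j => by rw [hη, one_div, inv_inv]
  simp only [hlam_eq] at hq hTb
  have hsoft := eq_softmax_cumScore hπ0 hπ
  have hpol : ∀ j, IsPolicy (π j) := fun j => funext (hsoft j) ▸ isPolicy_softmax _
  have hqB : ∀ j s a, |q j s a| ≤ qmax := fun j s a => (abs_apply_le_norm _ s a).trans (hqb j)
  obtain ⟨F, Φ, hF, hFC, hΦ⟩ := exists_aggregate (fun j => (hηpos j).le)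
    (fun j => TKL_eq_of_tilt P r γ (hηpos j).ne' (fun s a => hsoft j s ▸ softmax_pos _ a) (hπ j))
    hq hqB (fun j s a => (abs_apply_le_norm _ s a).trans (hTb j))
    (fun j s => abs_softValue_le (hηpos j) ((hpol j).1 s) ((hpol j).2 s) (hqB j s)) k
  simp only [sum_mul_softValue_eq (fun j => (hηpos j).ne') hsoft] at hΦ
  rw [← hZ] at hF
  have hgap := one_sub_mul_sub_le_of_softmax_aggregate hP hγ0.le hγ1.le hπstar hqstar
    (funext (hsoft (k + 1)) ▸ hqpol (k + 1)) hF hFC hΦ (fun s a => abs_apply_le_norm _ s a)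
  have hZpos : 0 < Z k := hZ k ▸ sum_pos (fun j _ => hηpos j) nonempty_range_add_one
  have hlog : 0 ≤ Real.log (Fintype.card A) := Real.log_nonneg (by exact_mod_cast Fintype.card_pos)
  have hweights := mul_le_mul_of_nonneg_right (lagged_variation_le η k) hqmax
  refine norm_le_of_forall_abs_le fun s a => ?_
  have hle := hopt _ (hpol (k + 1)) _ (hqpol (k + 1)) s a
  rw [Pi.sub_apply, Pi.sub_apply, abs_of_nonneg (sub_nonneg.2 hle), div_mul_div_comm, mul_one,
    div_mul_eq_mul_div, le_div_iff₀ (mul_pos (sub_pos.2 hγ1) hZpos)]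
  linarith [hgap s a, mul_nonneg hγ0.le hlog]
end
end
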